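/- arXiv:1711.04570 — 4 statements merged into one kernel-verified Lean document; each statement's English description precedes it below -/
import Mathlib

section
/- Let Q be a symmetric n×n real matrix and B an m×n real matrix with rank(B) = n. Then there exists X ∈ ℝ^{n×m} such that Q + XB + BᵀXᵀ is negative definite; one such X is X = -(1/2)·[1 + (λ_max(Q) + |λ_max(Q)|)/λ_min(BᵀB)]·Bᵀ. -/
open Matrix

lemma aux1 {k : ℕ} (A : Matrix (Fin k) (Fin k) ℝ) (hA : A.IsHermitian) (t : ℝ)
    (h : ∀ i, hA.eigenvalues i ≤ t) : (t • (1 : Matrix (Fin k) (Fin k) ℝ) - A).PosSemidef := by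
  have hspec := hA.spectral_theorem
  rw [Unitary.conjStarAlgAut_apply] at hspec
  set U := (hA.eigenvectorUnitary : Matrix (Fin k) (Fin k) ℝ) with hUdef
  have hU : U * star U = 1 := Unitary.mul_star_self_of_mem hA.eigenvectorUnitary.prop
  have hid : t • (1 : Matrix (Fin k) (Fin k) ℝ) - A
      = U * diagonal (fun i => t - hA.eigenvalues i) * star U := by
    have hd : diagonal (fun i => t - hA.eigenvalues i)
        = t • (1 : Matrix (Fin k) (Fin k) ℝ) - diagonal (RCLike.ofReal ∘ hA.eigenvalues) := by
      rw [← diagonal_one, ← diagonal_smul, ← diagonal_sub]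
      congr 1
      ext i j
      rcases eq_or_ne i j with rfl | hij <;>
        simp [Matrix.diagonal_apply, Matrix.one_apply, *]
    rw [hd, Matrix.mul_sub, Matrix.sub_mul, ← hspec]
    congr 1
    rw [mul_smul_comm, smul_mul_assoc, mul_one, hU]
  rw [hid]
  exact (posSemidef_diagonal_iff.mpr fun i => sub_nonneg.2 (h i)).mul_mul_conjTranspose_same U

lemma aux2 {k : ℕ} (A : Matrix (Fin k) (Fin k) ℝ) (hA : A.IsHermitian) (s : ℝ)
    (h : ∀ i, s ≤ hA.eigenvalues i) : (A - s • (1 : Matrix (Fin k) (Fin k) ℝ)).PosSemidef := by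
  have hspec := hA.spectral_theorem
  rw [Unitary.conjStarAlgAut_apply] at hspec
  set U := (hA.eigenvectorUnitary : Matrix (Fin k) (Fin k) ℝ) with hUdef
  have hU : U * star U = 1 := Unitary.mul_star_self_of_mem hA.eigenvectorUnitary.prop
  have hid : A - s • (1 : Matrix (Fin k) (Fin k) ℝ)
      = U * diagonal (fun i => hA.eigenvalues i - s) * star U := by
    have hd : diagonal (fun i => hA.eigenvalues i - s)
        = diagonal (RCLike.ofReal ∘ hA.eigenvalues) - s • (1 : Matrix (Fin k) (Fin k) ℝ) := by
      rw [← diagonal_one, ← diagonal_smul, ← diagonal_sub]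
      congr 1
      ext i j
      rcases eq_or_ne i j with rfl | hij <;>
        simp [Matrix.diagonal_apply, Matrix.one_apply, *]
    rw [hd, Matrix.mul_sub, Matrix.sub_mul, ← hspec]
    congr 1
    rw [mul_smul_comm, smul_mul_assoc, mul_one, hU]
  rw [hid]
  exact (posSemidef_diagonal_iff.mpr fun i => sub_nonneg.2 (h i)).mul_mul_conjTranspose_same U

lemma auxBB {n m : ℕ} (B : Matrix (Fin m) (Fin n) ℝ) (hB : B.rank = n) :
    (Bᵀ * B).PosDef := by
  have hker : LinearMap.ker B.mulVecLin = ⊥ := by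
    have h1 := LinearMap.finrank_range_add_finrank_ker B.mulVecLin
    rw [show Module.finrank ℝ (LinearMap.range B.mulVecLin) = n from hB] at h1
    simp only [Module.finrank_fintype_fun_eq_card, Fintype.card_fin] at h1
    have : Module.finrank ℝ (LinearMap.ker B.mulVecLin) = 0 := by omega
    exact Submodule.finrank_eq_zero.mp this
  rw [posDef_iff_dotProduct_mulVec]
  refine ⟨by simpa using isHermitian_conjTranspose_mul_self B, fun x hx => ?_⟩
  have hBx : B *ᵥ x ≠ 0 := by
    intro h0
    exact hx (LinearMap.ker_eq_bot.mp hker (by simpa [mulVecLin_apply] using h0 : B.mulVecLin x = B.mulVecLin 0))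
  have : star x ⬝ᵥ ((Bᵀ * B) *ᵥ x) = (B *ᵥ x) ⬝ᵥ (B *ᵥ x) := by
    rw [star_trivial, ← mulVec_mulVec, dotProduct_mulVec, vecMul_transpose]
  rw [this]
  have := dotProduct_star_self_pos_iff (R := ℝ) (v := B *ᵥ x) |>.mpr hBx
  simpa using this

theorem stmt_3 (n m : ℕ) (Q : Matrix (Fin n) (Fin n) ℝ) (B : Matrix (Fin m) (Fin n) ℝ)
    (hQ : Q.IsHermitian) (hB : B.rank = n)
    (hBB : (Bᵀ * B).IsHermitian) :
    ∃ X : Matrix (Fin n) (Fin m) ℝ,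
      X = (-(1 / 2) * (1 + ((⨆ i, hQ.eigenvalues i) + |⨆ i, hQ.eigenvalues i|) /
            (⨅ i, hBB.eigenvalues i))) • Bᵀ ∧
      (-(Q + X * B + Bᵀ * Xᵀ)).PosDef := by
  set lam := ⨆ i, hQ.eigenvalues i with hlam
  set mu := ⨅ i, hBB.eigenvalues i with hmu
  set c := -(1 / 2) * (1 + (lam + |lam|) / mu) with hc
  refine ⟨c • Bᵀ, rfl, ?_⟩
  have hsm : ((c • (Bᵀ * B) : Matrix (Fin n) (Fin n) ℝ)).IsHermitian := by
    unfold Matrix.IsHermitian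
    rw [conjTranspose_smul, hBB.eq]
    simp
  have hherm : (-(Q + c • Bᵀ * B + Bᵀ * (c • Bᵀ)ᵀ)).IsHermitian := by
    refine IsHermitian.neg ?_
    refine IsHermitian.add (IsHermitian.add hQ ?_) ?_
    · rw [Matrix.smul_mul]; exact hsm
    · have : Bᵀ * (c • Bᵀ)ᵀ = c • (Bᵀ * B) := by
        rw [transpose_smul, transpose_transpose, Matrix.mul_smul]
      rw [this]; exact hsm
  rcases Nat.eq_zero_or_pos n with hn | hn
  · refine ⟨hherm, fun x hx => absurd ?_ hx⟩
    subst hn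
    ext i; exact absurd i.2 (by omega)
  · have : Nonempty (Fin n) := ⟨⟨0, hn⟩⟩
    have hBBpd : (Bᵀ * B).PosDef := auxBB B hB
    -- mu > 0
    have hmupos : 0 < mu := by
      obtain ⟨i, hi⟩ := exists_eq_ciInf_of_finite (f := hBB.eigenvalues)
      rw [hmu, ← hi]
      exact hBBpd.eigenvalues_pos i
    have hlam_le : ∀ i, hQ.eigenvalues i ≤ lam := fun i =>
      le_ciSup (Set.Finite.bddAbove (Set.finite_range _)) i
    have hmu_le : ∀ i, mu ≤ hBB.eigenvalues i := fun i =>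
      ciInf_le (Set.Finite.bddBelow (Set.finite_range _)) i
    have hQbound := aux1 Q hQ lam hlam_le
    have hBBbound := aux2 (Bᵀ * B) hBB mu hmu_le
    refine posDef_iff_dotProduct_mulVec.mpr ⟨hherm, fun x hx => ?_⟩
    have hs : (0:ℝ) < x ⬝ᵥ x := by
      have := dotProduct_star_self_pos_iff (R := ℝ) (v := x) |>.mpr hx
      simpa using this
    set s := x ⬝ᵥ x with hsdef
    have hQx : x ⬝ᵥ (Q *ᵥ x) ≤ lam * s := by
      have := hQbound.dotProduct_mulVec_nonneg x
      simp only [star_trivial, Matrix.sub_mulVec, dotProduct_sub, smul_mulVec,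
        one_mulVec, dotProduct_smul, smul_eq_mul] at this
      linarith
    have hBx : mu * s ≤ x ⬝ᵥ ((Bᵀ * B) *ᵥ x) := by
      have := hBBbound.dotProduct_mulVec_nonneg x
      simp only [star_trivial, Matrix.sub_mulVec, dotProduct_sub, smul_mulVec,
        one_mulVec, dotProduct_smul, smul_eq_mul] at this
      linarith
    have hcoef : (0:ℝ) ≤ -(2*c) := by
      have h1 : (0:ℝ) ≤ lam + |lam| := by
        rcases abs_cases lam with ⟨h, _⟩ | ⟨h, _⟩ <;> linarith
      have : -(2*c) = 1 + (lam + |lam|) / mu := by rw [hc]; ring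
      rw [this]
      positivity
    -- the quadratic form
    have hform : star x ⬝ᵥ ((-(Q + c • Bᵀ * B + Bᵀ * (c • Bᵀ)ᵀ)) *ᵥ x)
        = -(x ⬝ᵥ (Q *ᵥ x)) - (2*c) * (x ⬝ᵥ ((Bᵀ * B) *ᵥ x)) := by
      have hX2 : Bᵀ * (c • Bᵀ)ᵀ = c • (Bᵀ * B) := by
        rw [transpose_smul, transpose_transpose, Matrix.mul_smul]
      rw [hX2, star_trivial]
      have hX1 : c • Bᵀ * B = c • (Bᵀ * B) := Matrix.smul_mul c Bᵀ B
      rw [hX1]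
      simp only [Matrix.neg_mulVec, Matrix.add_mulVec, dotProduct_neg, dotProduct_add,
        smul_mulVec, dotProduct_smul, smul_eq_mul]
      ring
    rw [hform]
    have key : -(2*c) * (mu * s) ≤ -(2*c) * (x ⬝ᵥ ((Bᵀ * B) *ᵥ x)) :=
      mul_le_mul_of_nonneg_left hBx hcoef
    have hval : -(2*c) * (mu * s) = (1 + (lam + |lam|)/mu) * (mu * s) := by rw [hc]; ring
    have hdiv : (lam + |lam|)/mu * mu = lam + |lam| := div_mul_cancel₀ _ (ne_of_gt hmupos)
    have habs : 0 ≤ |lam| := abs_nonneg lam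
    nlinarith [hmupos, hs, hQx, key, hval, hdiv]
end

section
/- Let Q be a symmetric n×n real matrix and B an m×n real matrix. If xᵀQx < 0 for all nonzero x ∈ ℝⁿ with Bx = 0, then there exists μ ∈ ℝ such that Q - μ·BᵀB ≺ 0. -/
open Matrix Filter Topology

theorem stmt_5 (n m : ℕ) (Q : Matrix (Fin n) (Fin n) ℝ) (B : Matrix (Fin m) (Fin n) ℝ)
    (hQ : Q.IsSymm)
    (h : ∀ x : Fin n → ℝ, x ≠ 0 → B *ᵥ x = 0 → x ⬝ᵥ (Q *ᵥ x) < 0) :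
    ∃ μ : ℝ, (-(Q - μ • (Bᵀ * B))).PosDef := by
  by_contra hcon
  push_neg at hcon
  set q : (Fin n → ℝ) → ℝ := fun y => y ⬝ᵥ (Q *ᵥ y) with hqdef
  set r : (Fin n → ℝ) → ℝ := fun y => (B *ᵥ y) ⬝ᵥ (B *ᵥ y) with hrdef
  have hqc : Continuous q := by
    exact continuous_id.dotProduct (continuous_const.matrix_mulVec continuous_id)
  have hrc : Continuous r := by
    exact (continuous_const.matrix_mulVec continuous_id).dotProduct
      (continuous_const.matrix_mulVec continuous_id)
  have hform : ∀ (μ : ℝ) (x : Fin n → ℝ),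
      x ⬝ᵥ ((-(Q - μ • (Bᵀ * B))) *ᵥ x) = -(q x - μ * r x) := by
    intro μ x
    have h1 : x ⬝ᵥ ((Bᵀ * B) *ᵥ x) = r x := by
      rw [hrdef, ← mulVec_mulVec, dotProduct_mulVec, vecMul_transpose]
    simp [neg_mulVec, sub_mulVec, smul_mulVec, dotProduct_sub, dotProduct_smul,
      dotProduct_neg, h1, smul_eq_mul, hqdef]
  have herm : ∀ μ : ℝ, (-(Q - μ • (Bᵀ * B))).IsHermitian := by
    intro μ
    have hBB : (Bᵀ * B).IsSymm := by
      rw [Matrix.IsSymm, transpose_mul, transpose_transpose]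
    unfold Matrix.IsHermitian
    rw [conjTranspose_eq_transpose_of_trivial, transpose_neg, transpose_sub,
      transpose_smul, hQ, hBB]
  have key : ∀ k : ℕ, ∃ y : Fin n → ℝ, ‖y‖ = 1 ∧ (k : ℝ) * r y ≤ q y := by
    intro k
    have := hcon (k : ℝ)
    rw [Matrix.posDef_iff_dotProduct_mulVec] at this
    push_neg at this
    obtain ⟨x, hx0, hx⟩ := this (herm _)
    rw [star_trivial, hform] at hx
    have hx' : (k : ℝ) * r x ≤ q x := by linarith
    refine ⟨‖x‖⁻¹ • x, ?_, ?_⟩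
    · rw [norm_smul, norm_inv, norm_norm, inv_mul_cancel₀ (norm_ne_zero_iff.2 hx0)]
    · have hq2 : q (‖x‖⁻¹ • x) = (‖x‖⁻¹)^2 * q x := by
        simp [hqdef, Matrix.mulVec_smul, smul_dotProduct, dotProduct_smul, smul_eq_mul]
        ring
      have hr2 : r (‖x‖⁻¹ • x) = (‖x‖⁻¹)^2 * r x := by
        simp [hrdef, Matrix.mulVec_smul, smul_dotProduct, dotProduct_smul, smul_eq_mul]
        ring
      rw [hq2, hr2]
      have : (0:ℝ) ≤ (‖x‖⁻¹)^2 := sq_nonneg _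
      nlinarith
  choose y hy1 hy2 using key
  have hmem : ∀ k, y k ∈ Metric.sphere (0 : Fin n → ℝ) 1 := by
    intro k; simpa [mem_sphere_iff_norm] using hy1 k
  obtain ⟨z, hz, φ, hφ, hconv⟩ :=
    (isCompact_sphere (0 : Fin n → ℝ) 1).tendsto_subseq hmem
  have hz1 : ‖z‖ = 1 := by simpa [mem_sphere_iff_norm] using hz
  have hz0 : z ≠ 0 := by intro hzz; rw [hzz, norm_zero] at hz1; norm_num at hz1
  -- q bounded above on the sequence
  obtain ⟨C, hC⟩ : ∃ C : ℝ, ∀ k, q (y k) ≤ C := by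
    obtain ⟨C, hC⟩ := ((isCompact_sphere (0 : Fin n → ℝ) 1).bddAbove_image
      hqc.continuousOn)
    exact ⟨C, fun k => hC ⟨y k, hmem k, rfl⟩⟩
  have hr0 : ∀ v : Fin n → ℝ, 0 ≤ r v := by
    intro v
    exact Finset.sum_nonneg fun i _ => mul_self_nonneg _
  -- r (y (φ k)) → 0
  have hrlim : Tendsto (fun k => r (y (φ k))) atTop (𝓝 0) := by
    have hupper : ∀ k, 1 ≤ k → r (y (φ k)) ≤ C / (φ k : ℝ) := by
      intro k hk
      have hφk : 1 ≤ φ k := le_trans hk (hφ.le_apply)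
      have hpos : (0:ℝ) < (φ k : ℝ) := by exact_mod_cast hφk
      rw [le_div_iff₀ hpos, mul_comm]
      exact le_trans (hy2 (φ k)) (hC (φ k))
    have h1 : Tendsto (fun k => C / (φ k : ℝ)) atTop (𝓝 0) := by
      apply Tendsto.div_atTop tendsto_const_nhds
      exact tendsto_natCast_atTop_atTop.comp hφ.tendsto_atTop
    refine squeeze_zero' ?_ ?_ h1
    · exact eventually_atTop.2 ⟨0, fun k _ => hr0 _⟩
    · exact eventually_atTop.2 ⟨1, hupper⟩
  have hrz : r z = 0 := by
    have := (hrc.tendsto z).comp hconv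
    exact tendsto_nhds_unique this hrlim
  have hBz : B *ᵥ z = 0 := by
    have : (B *ᵥ z) ⬝ᵥ (B *ᵥ z) = 0 := hrz
    exact dotProduct_self_eq_zero.mp this
  have hqz : 0 ≤ q z := by
    have hlim : Tendsto (fun k => q (y (φ k))) atTop (𝓝 (q z)) := (hqc.tendsto z).comp hconv
    refine le_of_tendsto_of_tendsto tendsto_const_nhds hlim ?_
    refine eventually_atTop.2 ⟨0, fun k _ => ?_⟩
    exact le_trans (mul_nonneg (Nat.cast_nonneg _) (hr0 _)) (hy2 (φ k))
  exact absurd (h z hz0 hBz) (not_lt.2 hqz)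
end

section
/- Let S ⊆ ℝ^d and Q : S → S^n, B : S → ℝ^{m×n} be continuous matrix-valued functions. If for each s ∈ S there exists μ(s) ∈ ℝ with Q(s) - μ(s)·Bᵀ(s)B(s) ≺ 0, then there exists a continuous function μ̃ : S → ℝ such that Q(s) - μ̃(s)·Bᵀ(s)B(s) ≺ 0 for all s ∈ S. -/
open Matrix

/-- smul of a positive definite real matrix by a positive scalar is positive definite. -/
lemma posDef_smul_aux {n : ℕ} {M : Matrix (Fin n) (Fin n) ℝ} (hM : M.PosDef) {a : ℝ}
    (ha : 0 < a) : (a • M).PosDef := by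
  refine Matrix.PosDef.of_dotProduct_mulVec_pos ?_ fun x hx => ?_
  · unfold Matrix.IsHermitian
    rw [conjTranspose_smul, hM.1]
    simp
  · rw [smul_mulVec, dotProduct_smul, smul_eq_mul]
    exact mul_pos ha (hM.dotProduct_mulVec_pos hx)

/-- coercivity: a positive definite real matrix has a uniform lower bound on its
quadratic form over the (sup-norm) unit sphere, hence everywhere by scaling. -/
lemma posDef_coercive {n : ℕ} {M : Matrix (Fin n) (Fin n) ℝ} (hM : M.PosDef) :
    ∃ c > 0, ∀ x : Fin n → ℝ, c * ‖x‖ ^ 2 ≤ x ⬝ᵥ M *ᵥ x := by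
  rcases Nat.eq_zero_or_pos n with hn | hn
  · refine ⟨1, one_pos, fun x => ?_⟩
    subst hn
    have hx : x = 0 := Subsingleton.elim _ _
    rw [hx, norm_zero]
    simp
  · haveI : Nonempty (Fin n) := ⟨⟨0, hn⟩⟩
    have hsphere : (Metric.sphere (0 : Fin n → ℝ) 1).Nonempty :=
      NormedSpace.sphere_nonempty.2 zero_le_one
    have hcomp : IsCompact (Metric.sphere (0 : Fin n → ℝ) 1) := isCompact_sphere _ _
    have hcontf : Continuous fun x : Fin n → ℝ => x ⬝ᵥ M *ᵥ x :=
      (continuous_id).dotProduct ((continuous_const (y := M)).matrix_mulVec continuous_id)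
    obtain ⟨u, hu, humin⟩ := hcomp.exists_isMinOn hsphere hcontf.continuousOn
    have hu1 : ‖u‖ = 1 := by simpa using hu
    have hune : u ≠ 0 := fun h => by simp [h] at hu1
    refine ⟨u ⬝ᵥ M *ᵥ u, by simpa using hM.dotProduct_mulVec_pos hune, fun x => ?_⟩
    by_cases hx : x = 0
    · simp [hx]
    · have hxn : 0 < ‖x‖ := norm_pos_iff.2 hx
      set v : Fin n → ℝ := ‖x‖⁻¹ • x with hv
      have hvn : ‖v‖ = 1 := by
        rw [hv, norm_smul, norm_inv, norm_norm, inv_mul_cancel₀ hxn.ne']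
      have hvmem : v ∈ Metric.sphere (0 : Fin n → ℝ) 1 := by simpa using hvn
      have hxv : x = ‖x‖ • v := by
        rw [hv, smul_smul, mul_inv_cancel₀ hxn.ne', one_smul]
      have hquad : x ⬝ᵥ M *ᵥ x = ‖x‖ ^ 2 * (v ⬝ᵥ M *ᵥ v) := by
        conv_lhs => rw [hxv]
        rw [mulVec_smul, smul_dotProduct, dotProduct_smul, smul_eq_mul, smul_eq_mul]
        ring
      have := isMinOn_iff.mp humin v hvmem
      rw [hquad]
      nlinarith [sq_nonneg ‖x‖]

/-- quadratic form perturbation bound. -/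
lemma quad_form_bound {n : ℕ} (A : Matrix (Fin n) (Fin n) ℝ) (x : Fin n → ℝ) :
    |x ⬝ᵥ A *ᵥ x| ≤ (∑ i, ∑ j, |A i j|) * ‖x‖ ^ 2 := by
  have h1 : x ⬝ᵥ A *ᵥ x = ∑ i, ∑ j, x i * (A i j * x j) := by
    simp [dotProduct, Matrix.mulVec, Finset.mul_sum]
  rw [h1]
  calc |∑ i, ∑ j, x i * (A i j * x j)| ≤ ∑ i, ∑ j, |x i * (A i j * x j)| := by
        refine (Finset.abs_sum_le_sum_abs _ _).trans ?_
        exact Finset.sum_le_sum fun i _ => Finset.abs_sum_le_sum_abs _ _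
    _ ≤ ∑ i, ∑ j, |A i j| * ‖x‖ ^ 2 := by
        refine Finset.sum_le_sum fun i _ => Finset.sum_le_sum fun j _ => ?_
        have hxi : |x i| ≤ ‖x‖ := by
          simpa using norm_le_pi_norm x i
        have hxj : |x j| ≤ ‖x‖ := by
          simpa using norm_le_pi_norm x j
        have habs : |x i * (A i j * x j)| = |x i| * (|A i j| * |x j|) := by
          rw [abs_mul, abs_mul]
        rw [habs]
        have h0 : (0:ℝ) ≤ |x i| := abs_nonneg _
        have h0' : (0:ℝ) ≤ |x j| := abs_nonneg _
        have h0'' : (0:ℝ) ≤ |A i j| := abs_nonneg _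
        have hxx : |x i| * |x j| ≤ ‖x‖ ^ 2 := by nlinarith [norm_nonneg x]
        calc |x i| * (|A i j| * |x j|) = |A i j| * (|x i| * |x j|) := by ring
          _ ≤ |A i j| * ‖x‖ ^ 2 := mul_le_mul_of_nonneg_left hxx h0''
    _ = (∑ i, ∑ j, |A i j|) * ‖x‖ ^ 2 := by
        rw [Finset.sum_mul]
        exact Finset.sum_congr rfl fun i _ => (Finset.sum_mul _ _ _).symm

/-- positive definiteness is open along a continuous hermitian-valued family. -/
lemma eventually_posDef {X : Type*} [TopologicalSpace X] {n : ℕ}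
    {N : X → Matrix (Fin n) (Fin n) ℝ} (hc : Continuous N)
    (hherm : ∀ y, (N y).IsHermitian) {x : X} (hx : (N x).PosDef) :
    ∀ᶠ y in nhds x, (N y).PosDef := by
  obtain ⟨c, hcpos, hcoer⟩ := posDef_coercive hx
  set ε : ℝ := c / (n ^ 2 + 1) with hε
  have hεpos : 0 < ε := div_pos hcpos (by positivity)
  have hev : ∀ᶠ y in nhds x, ∀ i j, |N y i j - N x i j| < ε := by
    rw [Filter.eventually_all]
    intro i
    rw [Filter.eventually_all]
    intro j
    have hcontij : Continuous fun y => N y i j := hc.matrix_elem i j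
    have := (hcontij.tendsto x).eventually (Metric.ball_mem_nhds (N x i j) hεpos)
    filter_upwards [this] with y hy
    simpa [Real.dist_eq] using hy
  filter_upwards [hev] with y hy
  refine Matrix.PosDef.of_dotProduct_mulVec_pos (hherm y) fun v hv => ?_
  have hvn : 0 < ‖v‖ := norm_pos_iff.2 hv
  have hsum : (∑ i, ∑ j, |(N y - N x) i j|) ≤ (n : ℝ) ^ 2 * ε := by
    calc (∑ i, ∑ j, |(N y - N x) i j|) ≤ ∑ i : Fin n, ∑ j : Fin n, ε := by
          refine Finset.sum_le_sum fun i _ => Finset.sum_le_sum fun j _ => ?_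
          simpa [Matrix.sub_apply] using (hy i j).le
      _ = (n : ℝ) ^ 2 * ε := by
          simp [Finset.sum_const]
          ring
  have hpert := quad_form_bound (N y - N x) v
  have hdecomp : v ⬝ᵥ N y *ᵥ v = v ⬝ᵥ N x *ᵥ v + v ⬝ᵥ (N y - N x) *ᵥ v := by
    rw [Matrix.sub_mulVec, dotProduct_sub]
    ring
  have hlower := hcoer v
  have hbound : |v ⬝ᵥ (N y - N x) *ᵥ v| ≤ (n : ℝ) ^ 2 * ε * ‖v‖ ^ 2 := by
    refine hpert.trans ?_
    have : (0:ℝ) ≤ ‖v‖ ^ 2 := sq_nonneg _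
    nlinarith
  have hstar : star v = v := by simp
  have hεlt : (n : ℝ) ^ 2 * ε < c := by
    have h1 : (0:ℝ) < (n:ℝ) ^ 2 + 1 := by positivity
    rw [hε, mul_div_assoc', div_lt_iff₀ h1]
    nlinarith
  rw [hstar, hdecomp]
  have habs := abs_le.1 hbound
  nlinarith [sq_nonneg ‖v‖, mul_pos hcpos (mul_pos hvn hvn)]

theorem stmt_13 (d n m : ℕ) (S : Set (Fin d → ℝ))
    (Q : (Fin d → ℝ) → Matrix (Fin n) (Fin n) ℝ)
    (B : (Fin d → ℝ) → Matrix (Fin m) (Fin n) ℝ)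
    (hQsym : ∀ s ∈ S, (Q s).IsSymm)
    (hQcont : ContinuousOn Q S) (hBcont : ContinuousOn B S)
    (hpt : ∀ s ∈ S, ∃ μ : ℝ, (-(Q s - μ • ((B s)ᵀ * B s))).PosDef) :
    ∃ μt : (Fin d → ℝ) → ℝ, ContinuousOn μt S ∧
      ∀ s ∈ S, (-(Q s - μt s • ((B s)ᵀ * B s))).PosDef := by
  classical
  -- the matrix family, as a function of the point and the parameter μ
  set P : (Fin d → ℝ) → Matrix (Fin n) (Fin n) ℝ := fun s => (B s)ᵀ * B s with hP
  set M : (Fin d → ℝ) → ℝ → Matrix (Fin n) (Fin n) ℝ :=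
    fun s μ => -(Q s - μ • P s) with hM
  -- hermitian-ness
  have hherm : ∀ s ∈ S, ∀ μ : ℝ, (M s μ).IsHermitian := by
    intro s hs μ
    have hPs : (P s).IsSymm := by
      unfold Matrix.IsSymm
      rw [hP, Matrix.transpose_mul, Matrix.transpose_transpose]
    have hSym : (M s μ).IsSymm := by
      have h1 : ((μ : ℝ) • P s).IsSymm := by
        unfold Matrix.IsSymm
        rw [Matrix.transpose_smul, hPs.eq]
      have h2 : (Q s - μ • P s).IsSymm := by
        unfold Matrix.IsSymm
        rw [Matrix.transpose_sub, (hQsym s hs).eq, h1.eq]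
      exact h2.neg
    -- over ℝ, symmetric = hermitian
    unfold Matrix.IsHermitian
    have := hSym.eq
    rw [Matrix.conjTranspose]
    simpa [Matrix.transpose_map] using congrArg (Matrix.map · (star : ℝ → ℝ)) this |>.trans
      (by ext i j; simp)
  -- work on the subtype
  set X := S
  haveI : NormalSpace ↥S := inferInstance
  haveI : ParacompactSpace ↥S := inferInstance
  set t : ↥S → Set ℝ := fun x => {μ | (M ↑x μ).PosDef} with ht
  -- convexity of the admissible sets
  have hconv : ∀ x : ↥S, Convex ℝ (t x) := by
    intro x
    intro μ₁ h₁ μ₂ h₂ a b ha hb hab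
    simp only [ht, Set.mem_setOf_eq] at h₁ h₂ ⊢
    simp only [smul_eq_mul]
    have hcomb : M ↑x (a * μ₁ + b * μ₂) = a • M ↑x μ₁ + b • M ↑x μ₂ := by
      have habQ : a • Q ↑x + b • Q ↑x = Q ↑x := by
        rw [← add_smul, hab, one_smul]
      simp only [hM]
      ext i j
      simp only [Matrix.neg_apply, Matrix.sub_apply, Matrix.smul_apply, Matrix.add_apply,
        smul_eq_mul]
      have h := congrFun (congrFun habQ i) j
      simp only [Matrix.add_apply, Matrix.smul_apply, smul_eq_mul] at h
      nlinarith [h]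
    rw [hcomb]
    rcases eq_or_lt_of_le ha with ha0 | ha0
    · have hb1 : b = 1 := by linarith
      rw [← ha0, hb1]
      simpa using h₂
    rcases eq_or_lt_of_le hb with hb0 | hb0
    · have ha1 : a = 1 := by linarith
      rw [← hb0, ha1]
      simpa using h₁
    exact (posDef_smul_aux h₁ ha0).add (posDef_smul_aux h₂ hb0)
  -- local constant selections
  have hloc : ∀ x : ↥S, ∃ c : ℝ, ∀ᶠ y in nhds x, c ∈ t y := by
    intro x
    obtain ⟨μ, hμ⟩ := hpt ↑x x.2
    refine ⟨μ, ?_⟩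
    have hQc : Continuous fun y : ↥S => Q ↑y :=
      continuousOn_iff_continuous_restrict.1 hQcont
    have hBc : Continuous fun y : ↥S => B ↑y :=
      continuousOn_iff_continuous_restrict.1 hBcont
    have hNc : Continuous fun y : ↥S => M ↑y μ := by
      simp only [hM, hP]
      exact ((hQc.sub ((continuous_const (y := μ)).smul
        (hBc.matrix_transpose.matrix_mul hBc))).neg)
    have hNh : ∀ y : ↥S, (M ↑y μ).IsHermitian := fun y => hherm ↑y y.2 μ
    have hNx : (M ↑x μ).PosDef := hμ
    have := eventually_posDef hNc hNh hNx
    filter_upwards [this] with y hy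
    exact hy
  obtain ⟨g, hg⟩ := exists_continuous_forall_mem_convex_of_local_const hconv hloc
  refine ⟨fun s => if h : s ∈ S then g ⟨s, h⟩ else 0, ?_, ?_⟩
  · rw [continuousOn_iff_continuous_restrict]
    have : S.restrict (fun s => if h : s ∈ S then g ⟨s, h⟩ else 0) = fun x : ↥S => g x := by
      funext x
      simp [Set.restrict, x.2]
    change Continuous (S.restrict (fun s => if h : s ∈ S then g ⟨s, h⟩ else 0))
    rw [this]
    exact g.continuous
  · intro s hs
    have := hg ⟨s, hs⟩
    simp only [ht, Set.mem_setOf_eq, hM] at this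
    simpa [show s ∈ S from hs, hP] using this
end

section
/- Let Q(s) = [[-1, 0], [0, s]] and B(s) = [0, s] (a 1×2 row vector) for s ∈ (0, ∞). Then: (a) for each s > 0, μ(s) = 1/s + 1 satisfies Q(s) - μ(s)·Bᵀ(s)B(s) ≺ 0; (b) there is no constant μ̄ ∈ ℝ such that Q(s) - μ̄·Bᵀ(s)B(s) ≺ 0 for all s ∈ (0, ∞). -/
open Matrix

lemma matcomp (s μ : ℝ) :
    -((!![-1, 0; 0, s] : Matrix (Fin 2) (Fin 2) ℝ) -
        μ • ((!![0, s] : Matrix (Fin 1) (Fin 2) ℝ)ᵀ * !![0, s])) =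
      !![1, 0; 0, μ * s * s - s] := by
  ext i j
  fin_cases i <;> fin_cases j <;>
    simp [Matrix.mul_apply, Fin.sum_univ_succ] <;> ring

lemma diagPosDef (a b : ℝ) (ha : 0 < a) (hb : 0 < b) :
    (!![a, 0; 0, b] : Matrix (Fin 2) (Fin 2) ℝ).PosDef := by
  rw [Matrix.posDef_iff_dotProduct_mulVec]
  constructor
  · unfold Matrix.IsHermitian
    ext i j
    fin_cases i <;> fin_cases j <;> simp [Matrix.conjTranspose_apply]
  · intro x hx
    have hx0 : x 0 ≠ 0 ∨ x 1 ≠ 0 := by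
      by_contra h
      push_neg at h
      apply hx
      ext i; fin_cases i <;> simp [h.1, h.2]
    have : star x ⬝ᵥ (!![a, 0; 0, b] : Matrix (Fin 2) (Fin 2) ℝ) *ᵥ x
        = a * (x 0)^2 + b * (x 1)^2 := by
      simp [dotProduct, mulVec, Fin.sum_univ_succ]
      ring
    rw [this]
    rcases hx0 with h | h
    · positivity
    · positivity

theorem stmt_18 :
    (∀ s : ℝ, 0 < s →
      (-((!![-1, 0; 0, s] : Matrix (Fin 2) (Fin 2) ℝ) -
          (1 / s + 1) • ((!![0, s] : Matrix (Fin 1) (Fin 2) ℝ)ᵀ * !![0, s]))).PosDef) ∧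
    ¬ ∃ μbar : ℝ, ∀ s : ℝ, 0 < s →
      (-((!![-1, 0; 0, s] : Matrix (Fin 2) (Fin 2) ℝ) -
          μbar • ((!![0, s] : Matrix (Fin 1) (Fin 2) ℝ)ᵀ * !![0, s]))).PosDef := by
  constructor
  · intro s hs
    rw [matcomp]
    apply diagPosDef _ _ one_pos
    have : (1 / s + 1) * s * s - s = s * s := by field_simp; ring
    rw [this]
    positivity
  · rintro ⟨μ, hμ⟩
    set s : ℝ := 1 / (|μ| + 1) with hsdef
    have habs : (0:ℝ) < |μ| + 1 := by positivity
    have hs : 0 < s := by positivity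
    have hpd := hμ s hs
    rw [matcomp] at hpd
    have h2 := hpd.dotProduct_mulVec_pos (x := ![0, 1]) (by
      intro h
      have := congrFun h 1
      simp at this)
    have : star ![(0:ℝ), 1] ⬝ᵥ (!![1, 0; 0, μ * s * s - s] : Matrix (Fin 2) (Fin 2) ℝ) *ᵥ ![0, 1]
        = μ * s * s - s := by
      simp [dotProduct, mulVec, Fin.sum_univ_succ]
    rw [this] at h2
    -- μ * s * s - s > 0 ⟹ μ * s > 1
    have hms : 1 < μ * s := by
      have h3 := sub_pos.mp h2
      have : 1 * s < (μ * s) * s := by nlinarith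
      exact lt_of_mul_lt_mul_right this hs.le
    have hμle : μ ≤ |μ| := le_abs_self μ
    have : μ * s ≤ 1 := by
      rw [hsdef]
      rw [mul_one_div, div_le_one habs]
      linarith
    linarith
end
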